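/- arXiv:2311.02429 — 2 statements merged into one kernel-verified Lean document; each statement's English description precedes it below -/
import Mathlib

section
/- For every k ∈ [0, 4] and all x, y ∈ ℝ³, the inequality (1+|x|²)^{-k/2}·(1+|y|²)^{-2} ≤ C·(1+|x−y|²)^{-k/2}·[(1+|y|²)^{-2} + (1+|y|²)^{-(2−k/2)}·(1+|x|²)^{-k/2}] holds with a constant C depending only on k. -/
/-!
Write `a = 1 + |x|²`, `b = 1 + |y|²`, `d = 1 + |x - y|²`. Since `|x - y|² ≤ 2|x|² + 2|y|²`,
`d ≤ 4 max(a, b)`. If `d ≤ 4a` then `a^{-k/2} ≤ 4^{k/2} d^{-k/2}` and the first term of the bracket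
suffices; if `d ≤ 4b` then `1 ≤ 4^{k/2} d^{-k/2} b^{k/2}` and the second term suffices.
So `C = 4^{k/2}` works.
-/

open Real

theorem one_add_norm_sub_sq_le {E : Type*} [SeminormedAddCommGroup E] (x y : E) :
    1 + ‖x - y‖ ^ 2 ≤ 4 * max (1 + ‖x‖ ^ 2) (1 + ‖y‖ ^ 2) := by
  have h : ‖x - y‖ ^ 2 ≤ 2 * (‖x‖ ^ 2 + ‖y‖ ^ 2) :=
    (pow_le_pow_left₀ (norm_nonneg _) (norm_sub_le x y) 2).trans add_sq_le
  linarith [le_max_left (1 + ‖x‖ ^ 2) (1 + ‖y‖ ^ 2), le_max_right (1 + ‖x‖ ^ 2) (1 + ‖y‖ ^ 2)]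

theorem rpow_neg_le_of_le_mul {a c d s : ℝ} (ha : 0 < a) (hc : 0 < c) (hd : 0 < d) (hs : 0 ≤ s)
    (hda : d ≤ c * a) : a ^ (-s) ≤ c ^ s * d ^ (-s) := by
  rw [rpow_neg ha.le, rpow_neg hd.le, ← div_eq_mul_inv, le_div_iff₀ (rpow_pos_of_pos hd s),
    ← div_eq_inv_mul, div_le_iff₀ (rpow_pos_of_pos ha s), ← mul_rpow hc.le ha.le]
  exact rpow_le_rpow hd.le hda hs

theorem rpow_neg_mul_rpow_neg_le_of_le_mul_max {a b c d s t : ℝ} (ha : 0 < a) (hb : 0 < b)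
    (hc : 0 < c) (hd : 0 < d) (hs : 0 ≤ s) (hdab : d ≤ c * max a b) :
    a ^ (-s) * b ^ (-t) ≤ c ^ s * d ^ (-s) * (b ^ (-t) + b ^ (-(t - s)) * a ^ (-s)) := by
  have hB := rpow_pos_of_pos hb (-t)
  rcases le_total a b with hab | hab
  · rw [max_eq_right hab] at hdab
    have hb_split : b ^ (-(t - s)) = b ^ s * b ^ (-t) := by
      rw [← rpow_add hb]; ring_nf
    have key : 1 ≤ c ^ s * d ^ (-s) * b ^ s := by
      have := mul_le_mul_of_nonneg_right (rpow_neg_le_of_le_mul hb hc hd hs hdab)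
        (rpow_pos_of_pos hb s).le
      rwa [← rpow_add hb, neg_add_cancel, rpow_zero] at this
    calc a ^ (-s) * b ^ (-t) ≤ c ^ s * d ^ (-s) * b ^ s * (a ^ (-s) * b ^ (-t)) :=
          le_mul_of_one_le_left (by positivity) key
      _ = c ^ s * d ^ (-s) * (b ^ (-(t - s)) * a ^ (-s)) := by rw [hb_split]; ring
      _ ≤ _ := by gcongr; exact le_add_of_nonneg_left hB.le
  · rw [max_eq_left hab] at hdab
    calc a ^ (-s) * b ^ (-t) ≤ c ^ s * d ^ (-s) * b ^ (-t) :=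
          mul_le_mul_of_nonneg_right (rpow_neg_le_of_le_mul ha hc hd hs hdab) hB.le
      _ ≤ _ := by gcongr; exact le_add_of_nonneg_right (by positivity)

theorem stmt4_general (k : ℝ) (hk0 : 0 ≤ k) :
    ∃ C > 0, ∀ x y : EuclideanSpace ℝ (Fin 3),
      (1 + ‖x‖ ^ 2) ^ (-(k / 2)) * (1 + ‖y‖ ^ 2) ^ (-2 : ℝ)
        ≤ C * (1 + ‖x - y‖ ^ 2) ^ (-(k / 2)) *
          ((1 + ‖y‖ ^ 2) ^ (-2 : ℝ)
            + (1 + ‖y‖ ^ 2) ^ (-(2 - k / 2)) * (1 + ‖x‖ ^ 2) ^ (-(k / 2))) :=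
  ⟨4 ^ (k / 2), by positivity, fun x y =>
    rpow_neg_mul_rpow_neg_le_of_le_mul_max (by positivity) (by positivity) (by norm_num)
      (by positivity) (by positivity) (one_add_norm_sub_sq_le x y)⟩

/-- Weight-splitting inequality: for `k ∈ [0,4]` there is `C = C(k)` such that
`(1+|x|²)^{-k/2}(1+|y|²)^{-2} ≤ C (1+|x−y|²)^{-k/2}[(1+|y|²)^{-2} +
(1+|y|²)^{-(2−k/2)}(1+|x|²)^{-k/2}]` for all `x, y ∈ ℝ³`. -/
theorem stmt4 (k : ℝ) (hk0 : 0 ≤ k) (hk4 : k ≤ 4) :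
    ∃ C > 0, ∀ x y : EuclideanSpace ℝ (Fin 3),
      (1 + ‖x‖ ^ 2) ^ (-(k / 2)) * (1 + ‖y‖ ^ 2) ^ (-2 : ℝ)
        ≤ C * (1 + ‖x - y‖ ^ 2) ^ (-(k / 2)) *
          ((1 + ‖y‖ ^ 2) ^ (-2 : ℝ)
            + (1 + ‖y‖ ^ 2) ^ (-(2 - k / 2)) * (1 + ‖x‖ ^ 2) ^ (-(k / 2))) :=
  stmt4_general k hk0
end

section
/- Let u₂ be smooth, divergence-free on ℝ³ with u₂ and ∇×u₂ bounded, and u smooth with u, ∇u ∈ L²(w dx), w(x) = (1+|x|²)^{−k}, k > 3/2. Then ∫_{ℝ³} w |u|² |∇u₂|² dx ≤ C(‖u₂‖_∞² + ‖∇×u₂‖_∞²) ∫_{ℝ³} w(|u|² + |∇u|²) dx, with C depending only on k. In particular the weighted L² norm of u·∇u₂-type terms is controlled without assuming ∇u₂ bounded. -/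
set_option maxHeartbeats 1000000
set_option synthInstance.maxHeartbeats 200000


open MeasureTheory RealInnerProductSpace

noncomputable section

abbrev E3 := EuclideanSpace ℝ (Fin 3)

def pd (f : E3 → ℝ) (i : Fin 3) (x : E3) : ℝ :=
  fderiv ℝ f x (EuclideanSpace.single i 1)

/-- Curl of a vector field on `ℝ³`. -/
def curl (v : E3 → E3) (x : E3) : E3 :=
  (WithLp.equiv 2 (Fin 3 → ℝ)).symm
    ![pd (fun y => v y 2) 1 x - pd (fun y => v y 1) 2 x,
      pd (fun y => v y 0) 2 x - pd (fun y => v y 2) 0 x,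
      pd (fun y => v y 1) 0 x - pd (fun y => v y 0) 1 x]

/-- Squared Frobenius norm of the gradient of a vector field. -/
def gradsq (v : E3 → E3) (x : E3) : ℝ :=
  ∑ i, ‖gradient (fun y => v y i) x‖ ^ 2

namespace Stmt17Aux

open Filter Topology

lemma norm_sq_eq (y : E3) : ‖y‖ ^ 2 = ∑ i, (y i) ^ 2 := by
  rw [EuclideanSpace.norm_eq, Real.sq_sqrt (by positivity)]
  simp [Real.norm_eq_abs, sq_abs]

lemma decomp (y : E3) : y = ∑ i, (y i) • EuclideanSpace.single i (1:ℝ) := by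
  ext j
  simp only [PiLp.ext_iff] at *
  rw [Fin.sum_univ_three]
  simp [EuclideanSpace.single_apply]
  fin_cases j <;> simp

lemma clm_apply_decomp (L : E3 →L[ℝ] ℝ) (y : E3) :
    L y = ∑ i, y i * L (EuclideanSpace.single i 1) := by
  conv_lhs => rw [decomp y]
  rw [map_sum]
  simp [smul_eq_mul]

lemma pd_comp (v : E3 → E3) (hv : Differentiable ℝ v) (i j : Fin 3) (x : E3) :
    pd (fun y => v y i) j x = fderiv ℝ v x (EuclideanSpace.single j 1) i := by
  have h : HasFDerivAt (fun y => v y i)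
      ((EuclideanSpace.proj (𝕜 := ℝ) i).comp (fderiv ℝ v x)) x :=
    (EuclideanSpace.proj (𝕜 := ℝ) i).hasFDerivAt.comp x (hv x).hasFDerivAt
  rw [pd, h.fderiv]
  rfl

lemma inner_gradient (f : E3 → ℝ) (x v : E3) : ⟪gradient f x, v⟫ = fderiv ℝ f x v := by
  rw [gradient, InnerProductSpace.toDual_symm_apply]

lemma gradient_apply (f : E3 → ℝ) (x : E3) (j : Fin 3) :
    gradient f x j = pd f j x := by
  have := inner_gradient f x (EuclideanSpace.single j 1)
  rw [real_inner_comm, EuclideanSpace.inner_single_left] at this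
  simpa [pd] using this

lemma gradsq_eq (v : E3 → E3) (x : E3) :
    gradsq v x = ∑ i, ∑ j, (pd (fun y => v y i) j x) ^ 2 := by
  unfold gradsq
  refine Finset.sum_congr rfl fun i _ => ?_
  rw [norm_sq_eq]
  exact Finset.sum_congr rfl fun j _ => by rw [gradient_apply]

lemma gradsq_nonneg (v : E3 → E3) (x : E3) : 0 ≤ gradsq v x :=
  Finset.sum_nonneg fun i _ => by positivity

lemma opnorm_sq_le (v : E3 → E3) (hv : Differentiable ℝ v) (x z : E3) :
    ‖fderiv ℝ v x z‖ ^ 2 ≤ gradsq v x * ‖z‖ ^ 2 := by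
  rw [norm_sq_eq, gradsq, Finset.sum_mul]
  refine Finset.sum_le_sum fun i _ => ?_
  have h1 : fderiv ℝ v x z i = fderiv ℝ (fun y => v y i) x z := by
    have h : HasFDerivAt (fun y => v y i)
        ((EuclideanSpace.proj (𝕜 := ℝ) i).comp (fderiv ℝ v x)) x :=
      (EuclideanSpace.proj (𝕜 := ℝ) i).hasFDerivAt.comp x (hv x).hasFDerivAt
    rw [h.fderiv]; rfl
  rw [h1, ← inner_gradient]
  nlinarith [abs_real_inner_le_norm (gradient (fun y => v y i) x) z,
    abs_nonneg (⟪gradient (fun y => v y i) x, z⟫),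
    neg_abs_le (⟪gradient (fun y => v y i) x, z⟫),
    norm_nonneg (gradient (fun y => v y i) x), norm_nonneg z,
    sq_abs (⟪gradient (fun y => v y i) x, z⟫)]

lemma pd_cont (g : E3 → ℝ) (hg : ContDiff ℝ 1 g) (j : Fin 3) : Continuous (pd g j) :=
  (ContinuousLinearMap.apply ℝ ℝ (EuclideanSpace.single j (1:ℝ))).continuous.comp
    (hg.continuous_fderiv one_ne_zero)

lemma gradsq_continuous (v : E3 → E3) (hv : ContDiff ℝ (⊤ : ℕ∞) v) : Continuous (gradsq v) := by
  have h : gradsq v = fun x => ∑ i, ∑ j, (pd (fun y => v y i) j x) ^ 2 :=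
    funext (gradsq_eq v)
  rw [h]
  refine continuous_finset_sum _ fun i _ => continuous_finset_sum _ fun j _ => ?_
  exact (pd_cont _ (((EuclideanSpace.proj (𝕜 := ℝ) i).contDiff.comp hv).of_le (by simp)) j).pow 2

lemma curl_normsq (v : E3 → E3) (x : E3) : ‖curl v x‖ ^ 2 =
    (pd (fun y => v y 2) 1 x - pd (fun y => v y 1) 2 x) ^ 2
    + (pd (fun y => v y 0) 2 x - pd (fun y => v y 2) 0 x) ^ 2
    + (pd (fun y => v y 1) 0 x - pd (fun y => v y 0) 1 x) ^ 2 := by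
  rw [norm_sq_eq, Fin.sum_univ_three]
  rfl

lemma curl_normsq_continuous (v : E3 → E3) (hv : ContDiff ℝ (⊤ : ℕ∞) v) :
    Continuous (fun x => ‖curl v x‖ ^ 2) := by
  have h : (fun x => ‖curl v x‖ ^ 2) = fun x =>
      (pd (fun y => v y 2) 1 x - pd (fun y => v y 1) 2 x) ^ 2
      + (pd (fun y => v y 0) 2 x - pd (fun y => v y 2) 0 x) ^ 2
      + (pd (fun y => v y 1) 0 x - pd (fun y => v y 0) 1 x) ^ 2 := funext (curl_normsq v)
  rw [h]
  have hc : ∀ i : Fin 3, ContDiff ℝ 1 (fun y => v y i) :=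
    fun i => ((EuclideanSpace.proj (𝕜 := ℝ) i).contDiff.comp hv).of_le (by simp)
  exact ((((pd_cont _ (hc 2) 1).sub (pd_cont _ (hc 1) 2)).pow 2).add
    (((pd_cont _ (hc 0) 2).sub (pd_cont _ (hc 2) 0)).pow 2)).add
      (((pd_cont _ (hc 1) 0).sub (pd_cont _ (hc 0) 1)).pow 2)

lemma div_thm (F : E3 → E3) (hF : ContDiff ℝ 1 F) (hFi : Integrable F)
    (hdiv : Integrable (fun x => ∑ i, pd (fun y => F y i) i x)) :
    (∫ x, ∑ i, pd (fun y => F y i) i x) = 0 := by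
  classical
  set c : ContDiffBump (0 : E3) := ⟨1, 2, one_pos, one_lt_two⟩ with hc
  have hc1 : ContDiff ℝ 1 (c : E3 → ℝ) := by
    have := c.contDiff (n := 1)
    exact_mod_cast this
  obtain ⟨K, hK⟩ := (c.hasCompactSupport.fderiv ℝ).exists_bound_of_continuous
    (hc1.continuous_fderiv one_ne_zero)
  have hK0 : 0 ≤ K := le_trans (norm_nonneg _) (hK 0)
  -- the cutoffs
  set s : ℕ → ℝ := fun n => (n : ℝ) + 1 with hs
  have hs1 : ∀ n, 1 ≤ s n := fun n => by
    simp only [hs]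
    exact le_add_of_nonneg_left (Nat.cast_nonneg n)
  have hs0 : ∀ n, 0 < s n := fun n => lt_of_lt_of_le one_pos (hs1 n)
  set χ : ℕ → E3 → ℝ := fun n x => c ((s n)⁻¹ • x) with hχ
  have hm : ∀ n, ContDiff ℝ 1 (fun x : E3 => (s n)⁻¹ • x) :=
    fun n => contDiff_id.const_smul _
  have hχ1 : ∀ n, ContDiff ℝ 1 (χ n) := fun n => hc1.comp (hm n)
  have hχcs : ∀ n, HasCompactSupport (χ n) := fun n =>
    c.hasCompactSupport.comp_homeomorph
      (Homeomorph.smulOfNeZero ((s n)⁻¹) (by positivity))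
  have hχd : ∀ n x, HasFDerivAt (χ n)
      ((fderiv ℝ (c : E3 → ℝ) ((s n)⁻¹ • x)).comp
        ((s n)⁻¹ • ContinuousLinearMap.id ℝ E3)) x := by
    intro n x
    have hmx : HasFDerivAt (fun y : E3 => (s n)⁻¹ • y)
        ((s n)⁻¹ • ContinuousLinearMap.id ℝ E3) x := by
      exact (hasFDerivAt_id x).const_smul ((s n)⁻¹)
    have hcx : HasFDerivAt (c : E3 → ℝ) (fderiv ℝ (c : E3 → ℝ) ((s n)⁻¹ • x)) ((s n)⁻¹ • x) :=
      ((hc1.differentiable one_ne_zero) _).hasFDerivAt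
    exact hcx.comp x hmx
  have hχdnorm : ∀ n x, ‖fderiv ℝ (χ n) x‖ ≤ K * (s n)⁻¹ := by
    intro n x
    rw [(hχd n x).fderiv]
    refine le_trans (ContinuousLinearMap.opNorm_comp_le _ _) ?_
    apply mul_le_mul (hK _) ?_ (norm_nonneg _) hK0
    refine ContinuousLinearMap.opNorm_le_bound _ (by positivity) (fun y => ?_)
    simp only [ContinuousLinearMap.smul_apply, ContinuousLinearMap.coe_id', id_eq,
      norm_smul, norm_inv, Real.norm_eq_abs, abs_of_pos (hs0 n)]
    exact le_rfl
  -- key per-n identity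
  have key : ∀ n, ∫ x, χ n x * (∑ i, pd (fun y => F y i) i x)
      = - ∫ x, fderiv ℝ (χ n) x (F x) := by
    intro n
    have hFcomp : ∀ i : Fin 3, Continuous fun x => F x i :=
      fun i => (EuclideanSpace.proj (𝕜 := ℝ) i).continuous.comp hF.continuous
    have hfdF : ∀ i : Fin 3, Continuous fun x => fderiv ℝ (fun y => F y i) x := by
      intro i
      have : ContDiff ℝ 1 (fun y => F y i) :=
        (EuclideanSpace.proj (𝕜 := ℝ) i).contDiff.comp hF
      exact this.continuous_fderiv one_ne_zero
    have hχcont : ∀ m, Continuous (χ m) := fun m => (hχ1 m).continuous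
    have hχfcont : ∀ m, Continuous (fderiv ℝ (χ m)) := fun m =>
      (hχ1 m).continuous_fderiv one_ne_zero
    have step : ∀ i : Fin 3, ∫ x, χ n x * pd (fun y => F y i) i x
        = - ∫ x, (fderiv ℝ (χ n) x) (EuclideanSpace.single i 1) * F x i := by
      intro i
      have h1 : Integrable (fun x => (fderiv ℝ (χ n) x) (EuclideanSpace.single i 1) * F x i) := by
        apply Continuous.integrable_of_hasCompactSupport
        · exact (((ContinuousLinearMap.apply ℝ ℝ
            (EuclideanSpace.single i (1:ℝ))).continuous.comp (hχfcont n)).mul (hFcomp i))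
        · apply HasCompactSupport.mul_right
          exact ((hχcs n).fderiv ℝ).comp_left (g := fun L : E3 →L[ℝ] ℝ =>
            L (EuclideanSpace.single i 1)) rfl
      have h2 : Integrable (fun x => χ n x * (fderiv ℝ (fun y => F y i) x)
          (EuclideanSpace.single i 1)) := by
        apply Continuous.integrable_of_hasCompactSupport
        · exact ((hχcont n).mul ((ContinuousLinearMap.apply ℝ ℝ
            (EuclideanSpace.single i (1:ℝ))).continuous.comp (hfdF i)))
        · exact (hχcs n).mul_right
      have h3 : Integrable (fun x => χ n x * F x i) :=
        Continuous.integrable_of_hasCompactSupport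
          ((hχcont n).mul (hFcomp i)) ((hχcs n).mul_right)
      exact integral_mul_fderiv_eq_neg_fderiv_mul_of_integrable h1 h2 h3
        (fun x _ => (hχ1 n).differentiable one_ne_zero x)
        (fun x _ => ((EuclideanSpace.proj (𝕜 := ℝ) i).contDiff.comp hF).differentiable one_ne_zero x)
    calc ∫ x, χ n x * (∑ i, pd (fun y => F y i) i x)
        = ∫ x, ∑ i, χ n x * pd (fun y => F y i) i x := by
          congr 1; ext x; rw [Finset.mul_sum]
      _ = ∑ i, ∫ x, χ n x * pd (fun y => F y i) i x := by
          apply integral_finset_sum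
          intro i _
          apply Continuous.integrable_of_hasCompactSupport
          · exact ((hχcont n).mul ((ContinuousLinearMap.apply ℝ ℝ
              (EuclideanSpace.single i (1:ℝ))).continuous.comp (hfdF i)))
          · exact (hχcs n).mul_right
      _ = ∑ i, - ∫ x, (fderiv ℝ (χ n) x) (EuclideanSpace.single i 1) * F x i := by
          exact Finset.sum_congr rfl fun i _ => step i
      _ = - ∑ i, ∫ x, (fderiv ℝ (χ n) x) (EuclideanSpace.single i 1) * F x i := by
          rw [Finset.sum_neg_distrib]
      _ = - ∫ x, ∑ i, (fderiv ℝ (χ n) x) (EuclideanSpace.single i 1) * F x i := by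
          congr 1
          refine (integral_finset_sum _ (fun i _ => ?_)).symm
          apply Continuous.integrable_of_hasCompactSupport
          · exact (((ContinuousLinearMap.apply ℝ ℝ
              (EuclideanSpace.single i (1:ℝ))).continuous.comp (hχfcont n)).mul (hFcomp i))
          · apply HasCompactSupport.mul_right
            exact ((hχcs n).fderiv ℝ).comp_left (g := fun L : E3 →L[ℝ] ℝ =>
              L (EuclideanSpace.single i 1)) rfl
      _ = - ∫ x, fderiv ℝ (χ n) x (F x) := by
          congr 1; apply integral_congr_ae; filter_upwards with x
          rw [clm_apply_decomp]
          exact Finset.sum_congr rfl fun i _ => mul_comm _ _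
  -- limit of LHS
  have hL : Tendsto (fun n => ∫ x, χ n x * (∑ i, pd (fun y => F y i) i x)) atTop
      (𝓝 (∫ x, ∑ i, pd (fun y => F y i) i x)) := by
    apply tendsto_integral_of_dominated_convergence
      (fun x => |∑ i, pd (fun y => F y i) i x|)
    · intro n
      exact (((hχ1 n).continuous).aestronglyMeasurable.mul hdiv.aestronglyMeasurable)
    · exact hdiv.abs
    · intro n
      filter_upwards with x
      rw [norm_mul]
      calc ‖χ n x‖ * ‖∑ i, pd (fun y => F y i) i x‖
          ≤ 1 * ‖∑ i, pd (fun y => F y i) i x‖ := by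
            apply mul_le_mul_of_nonneg_right ?_ (norm_nonneg _)
            rw [Real.norm_eq_abs, abs_of_nonneg c.nonneg]
            exact c.le_one
        _ = |∑ i, pd (fun y => F y i) i x| := by rw [one_mul, Real.norm_eq_abs]
    · filter_upwards with x
      have : ∀ᶠ n in atTop, χ n x = 1 := by
        filter_upwards [eventually_ge_atTop (Nat.ceil ‖x‖)] with n hn
        apply c.one_of_mem_closedBall
        simp only [Metric.mem_closedBall, dist_zero_right, norm_smul, norm_inv,
          Real.norm_eq_abs, abs_of_pos (hs0 n)]
        rw [inv_mul_le_iff₀ (hs0 n), mul_one]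
        calc ‖x‖ ≤ (Nat.ceil ‖x‖ : ℝ) := Nat.le_ceil _
          _ ≤ (n : ℝ) := by exact_mod_cast hn
          _ ≤ s n := by simp [hs]
      apply Tendsto.congr' ?_ tendsto_const_nhds
      filter_upwards [this] with n hn
      rw [hn, one_mul]
  -- limit of RHS
  have hR : Tendsto (fun n => ∫ x, fderiv ℝ (χ n) x (F x)) atTop (𝓝 0) := by
    have hb : ∀ n, ‖∫ x, fderiv ℝ (χ n) x (F x)‖ ≤ (K * ∫ x, ‖F x‖) * (s n)⁻¹ := by
      intro n
      calc ‖∫ x, fderiv ℝ (χ n) x (F x)‖ ≤ ∫ x, ‖fderiv ℝ (χ n) x (F x)‖ :=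
            norm_integral_le_integral_norm _
        _ ≤ ∫ x, (K * (s n)⁻¹) * ‖F x‖ := by
            apply integral_mono_of_nonneg
            · filter_upwards with x; positivity
            · exact hFi.norm.const_mul _
            · filter_upwards with x
              calc ‖fderiv ℝ (χ n) x (F x)‖ ≤ ‖fderiv ℝ (χ n) x‖ * ‖F x‖ :=
                    ContinuousLinearMap.le_opNorm _ _
                _ ≤ (K * (s n)⁻¹) * ‖F x‖ :=
                    mul_le_mul_of_nonneg_right (hχdnorm n x) (norm_nonneg _)
        _ = (K * ∫ x, ‖F x‖) * (s n)⁻¹ := by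
            rw [integral_const_mul]; ring
    have hten : Tendsto (fun n : ℕ => (K * ∫ x, ‖F x‖) * (s n)⁻¹) atTop (𝓝 0) := by
      have : Tendsto (fun n : ℕ => (s n)⁻¹) atTop (𝓝 0) := by
        apply Tendsto.inv_tendsto_atTop
        apply tendsto_atTop_add_const_right
        exact tendsto_natCast_atTop_atTop
      simpa using (this.const_mul (K * ∫ x, ‖F x‖))
    exact squeeze_zero_norm hb hten
  have h1 : Tendsto (fun n => - ∫ x, fderiv ℝ (χ n) x (F x)) atTop
      (𝓝 (∫ x, ∑ i, pd (fun y => F y i) i x)) := Filter.Tendsto.congr key hL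
  have h2 : Tendsto (fun n => - ∫ x, fderiv ℝ (χ n) x (F x)) atTop (𝓝 (-0)) := hR.neg
  simpa using tendsto_nhds_unique h1 h2

lemma symm_pd (g : E3 → ℝ) (hg : ContDiff ℝ 2 g) (l j : Fin 3) (x : E3) :
    pd (fun y => pd g l y) j x = pd (fun y => pd g j y) l x := by
  have hdf : DifferentiableAt ℝ (fderiv ℝ g) x := by
    have : ContDiff ℝ 1 (fderiv ℝ g) := hg.fderiv_right (by norm_num)
    exact (this.differentiable one_ne_zero) x
  have key : ∀ m j : Fin 3, pd (fun y => pd g m y) j x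
      = fderiv ℝ (fderiv ℝ g) x (EuclideanSpace.single j 1) (EuclideanSpace.single m 1) := by
    intro m j
    have h1 : HasFDerivAt (fun y => fderiv ℝ g y (EuclideanSpace.single m 1))
        ((ContinuousLinearMap.apply ℝ ℝ (EuclideanSpace.single m (1:ℝ))).comp
          (fderiv ℝ (fderiv ℝ g) x)) x :=
      (ContinuousLinearMap.apply ℝ ℝ (EuclideanSpace.single m (1:ℝ))).hasFDerivAt.comp x
        hdf.hasFDerivAt
    show fderiv ℝ (fun y => fderiv ℝ g y (EuclideanSpace.single m 1)) x
        (EuclideanSpace.single j 1) = _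
    rw [h1.fderiv]
    rfl
  rw [key l j, key j l]
  exact (hg.contDiffAt.isSymmSndFDerivAt (by simp)).eq _ _

lemma divV_eq (v : E3 → E3) (hv : ContDiff ℝ (⊤ : ℕ∞) v)
    (hdv : ∀ x, ∑ i, pd (fun y => v y i) i x = 0) (x : E3) :
    ∑ i, pd (fun y => fderiv ℝ v y (v y) i) i x
      = gradsq v x - ‖curl v x‖ ^ 2 := by
  have hv1 : Differentiable ℝ v := hv.differentiable (by simp)
  have hvi : ∀ i : Fin 3, ContDiff ℝ (⊤ : ℕ∞) (fun y => v y i) :=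
    fun i => (EuclideanSpace.proj (𝕜 := ℝ) i).contDiff.comp hv
  have hvi2 : ∀ i : Fin 3, ContDiff ℝ 2 (fun y => v y i) := fun i => (hvi i).of_le (WithTop.coe_le_coe.mpr le_top)
  have hgC : ∀ i l : Fin 3, ContDiff ℝ 1
      (fun y => fderiv ℝ (fun z => v z i) y (EuclideanSpace.single l 1)) := by
    intro i l
    exact ((hvi i).fderiv_right (WithTop.coe_le_coe.mpr le_top)).clm_apply contDiff_const
  -- step 1 : component of V as a sum
  have step1 : ∀ i : Fin 3, (fun y => fderiv ℝ v y (v y) i)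
      = fun y => ∑ l, v y l * fderiv ℝ (fun z => v z i) y (EuclideanSpace.single l 1) := by
    intro i
    funext y
    conv_lhs => rw [decomp (v y)]
    rw [map_sum, Fin.sum_univ_three, Fin.sum_univ_three]
    simp only [_root_.map_smul, PiLp.add_apply, PiLp.smul_apply, smul_eq_mul]
    rw [← pd_comp v hv1 i 0, ← pd_comp v hv1 i 1, ← pd_comp v hv1 i 2]
    rfl
  -- step 2 : pd of V component
  have step2 : ∀ i j : Fin 3, pd (fun y => fderiv ℝ v y (v y) i) j x
      = ∑ l, (v x l * pd (fun y => pd (fun z => v z i) l y) j x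
          + pd (fun z => v z i) l x * pd (fun z => v z l) j x) := by
    intro i j
    have hterm : ∀ l : Fin 3, HasFDerivAt
        (fun y => v y l * fderiv ℝ (fun z => v z i) y (EuclideanSpace.single l 1))
        (v x l • (fderiv ℝ (fun y => fderiv ℝ (fun z => v z i) y (EuclideanSpace.single l 1)) x)
          + (fderiv ℝ (fun z => v z i) x (EuclideanSpace.single l 1)) •
            (fderiv ℝ (fun z => v z l) x)) x := by
      intro l
      exact HasFDerivAt.mul (((hvi l).differentiable (by simp) x).hasFDerivAt)
        (((hgC i l).differentiable one_ne_zero x).hasFDerivAt)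
    have hsum : HasFDerivAt
        (fun y => ∑ l, v y l * fderiv ℝ (fun z => v z i) y (EuclideanSpace.single l 1))
        (∑ l, (v x l • (fderiv ℝ (fun y => fderiv ℝ (fun z => v z i) y
            (EuclideanSpace.single l 1)) x)
          + (fderiv ℝ (fun z => v z i) x (EuclideanSpace.single l 1)) •
            (fderiv ℝ (fun z => v z l) x))) x :=
      HasFDerivAt.fun_sum (fun l _ => hterm l)
    rw [step1 i]
    show fderiv ℝ _ x (EuclideanSpace.single j 1) = _
    rw [hsum.fderiv]
    rw [ContinuousLinearMap.sum_apply]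
    refine Finset.sum_congr rfl fun l _ => ?_
    rw [ContinuousLinearMap.add_apply, ContinuousLinearMap.smul_apply,
      ContinuousLinearMap.smul_apply, smul_eq_mul, smul_eq_mul]
    rfl
  -- the second-derivative terms vanish
  have hzero : ∀ l : Fin 3, ∑ i, pd (fun y => pd (fun z => v z i) l y) i x = 0 := by
    intro l
    have h1 : ∀ i : Fin 3, pd (fun y => pd (fun z => v z i) l y) i x
        = pd (fun y => pd (fun z => v z i) i y) l x :=
      fun i => symm_pd _ (hvi2 i) l i x
    rw [Fin.sum_univ_three, h1 0, h1 1, h1 2]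
    have hdiffs : ∀ i ∈ (Finset.univ : Finset (Fin 3)), DifferentiableAt ℝ
        (fun y => pd (fun z => v z i) i y) x :=
      fun i _ => ((hgC i i).differentiable one_ne_zero) x
    have hs : (∑ i, fderiv ℝ (fun y => pd (fun z => v z i) i y) x)
        = fderiv ℝ (fun y => ∑ i, pd (fun z => v z i) i y) x := (fderiv_fun_sum hdiffs).symm
    have hz : (fun y => ∑ i, pd (fun z => v z i) i y) = fun _ => (0:ℝ) := funext hdv
    have : ∑ i, pd (fun y => pd (fun z => v z i) i y) l x
        = (∑ i, fderiv ℝ (fun y => pd (fun z => v z i) i y) x) (EuclideanSpace.single l 1) := by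
      rw [ContinuousLinearMap.sum_apply]; rfl
    rw [Fin.sum_univ_three] at this
    rw [this, hs, hz, fderiv_fun_const]
    simp
  -- assemble
  have expand : ∑ i, pd (fun y => fderiv ℝ v y (v y) i) i x
      = ∑ i, ∑ l, pd (fun z => v z i) l x * pd (fun z => v z l) i x := by
    rw [Finset.sum_congr rfl (fun i _ => step2 i i)]
    have h0 := hzero 0
    have h1 := hzero 1
    have h2 := hzero 2
    simp only [Fin.sum_univ_three] at h0 h1 h2 ⊢
    linear_combination (v x 0) * h0 + (v x 1) * h1 + (v x 2) * h2
  rw [expand, gradsq_eq, norm_sq_eq]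
  have hcurl : ∀ i : Fin 3, curl v x i
      = ![pd (fun y => v y 2) 1 x - pd (fun y => v y 1) 2 x,
          pd (fun y => v y 0) 2 x - pd (fun y => v y 2) 0 x,
          pd (fun y => v y 1) 0 x - pd (fun y => v y 0) 1 x] i := fun i => rfl
  simp only [Fin.sum_univ_three]
  rw [hcurl 0, hcurl 1, hcurl 2]
  simp only [Matrix.cons_val_zero, Matrix.cons_val_one, Matrix.head_cons,
    Matrix.cons_val_two, Matrix.tail_cons]
  ring

end Stmt17Aux

/-- Weighted control of `∫ w|u|²|∇u₂|²` by `‖u₂‖∞, ‖∇×u₂‖∞` alone (without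
assuming `∇u₂` bounded), for divergence-free `u₂`, `w = (1+|x|²)^{−k}`,
`k > 3/2`, `C = C(k)`. -/
theorem stmt17 (k : ℝ) (hk : 3 / 2 < k) :
    ∃ C > (0:ℝ), ∀ (u₂ u : E3 → E3) (M₁ M₂ : ℝ),
      ContDiff ℝ (⊤ : ℕ∞) u₂ → ContDiff ℝ (⊤ : ℕ∞) u →
      (∀ x, ∑ i, pd (fun y => u₂ y i) i x = 0) →
      (∀ x, ‖u₂ x‖ ≤ M₁) → (∀ x, ‖curl u₂ x‖ ≤ M₂) →
      Integrable (fun x => (1 + ‖x‖ ^ 2) ^ (-k) * (‖u x‖ ^ 2 + gradsq u x)) →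
      Integrable (fun x => (1 + ‖x‖ ^ 2) ^ (-k) * ‖u x‖ ^ 2 * gradsq u₂ x) →
      (∫ x, (1 + ‖x‖ ^ 2) ^ (-k) * ‖u x‖ ^ 2 * gradsq u₂ x)
        ≤ C * (M₁ ^ 2 + M₂ ^ 2) *
          ∫ x, (1 + ‖x‖ ^ 2) ^ (-k) * (‖u x‖ ^ 2 + gradsq u x) := by
  classical
  open Stmt17Aux in
  refine ⟨2 * k ^ 2 + 8, by positivity, ?_⟩
  intro u₂ u M₁ M₂ hu₂ hu hdiv₂ hM₁ hM₂ hI1 hI2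
  have hk0 : (0:ℝ) < k := lt_trans (by norm_num) hk
  have hM₁0 : 0 ≤ M₁ := le_trans (norm_nonneg _) (hM₁ 0)
  have hM₂0 : 0 ≤ M₂ := le_trans (norm_nonneg _) (hM₂ 0)
  set w : E3 → ℝ := fun x => (1 + ‖x‖ ^ 2) ^ (-k) with hw
  set q : E3 → ℝ := fun x => ‖u x‖ ^ 2 with hq
  set V : E3 → E3 := fun x => fderiv ℝ u₂ x (u₂ x) with hV
  have hNpos : ∀ x : E3, (0:ℝ) < 1 + ‖x‖ ^ 2 := fun x => by positivity
  have hwpos : ∀ x, 0 < w x := fun x => Real.rpow_pos_of_pos (hNpos x) _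
  have hq0 : ∀ x, 0 ≤ q x := fun x => by positivity
  -- smoothness
  have hu₂d : Differentiable ℝ u₂ := hu₂.differentiable (by simp)
  have hud : Differentiable ℝ u := hu.differentiable (by simp)
  have hNsm : ContDiff ℝ 1 (fun x : E3 => 1 + ‖x‖ ^ 2) :=
    contDiff_const.add (contDiff_norm_sq ℝ)
  have hwsm : ContDiff ℝ 1 w := by
    rw [contDiff_iff_contDiffAt]
    intro x
    exact (Real.contDiffAt_rpow_const_of_ne (ne_of_gt (hNpos x))).comp x hNsm.contDiffAt
  have hqsm : ContDiff ℝ 1 q := (contDiff_norm_sq ℝ).comp (hu.of_le (by simp))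
  have hfsm : ContDiff ℝ 1 (fun x => w x * q x) := hwsm.mul hqsm
  have hVsm : ContDiff ℝ 1 V := (hu₂.fderiv_right (WithTop.coe_le_coe.mpr le_top)).clm_apply (hu₂.of_le (by simp))
  have hGsm : ContDiff ℝ 1 (fun x => (w x * q x) • V x) := hfsm.smul hVsm
  -- derivative of the weight and its bound
  have hwf : ∀ x, HasFDerivAt w
      ((-k * (1 + ‖x‖ ^ 2) ^ (-k - 1)) • (2 • (innerSL ℝ) x)) x := by
    intro x
    have hNf : HasFDerivAt (fun x : E3 => 1 + ‖x‖ ^ 2) (2 • (innerSL ℝ) x) x :=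
      ((hasStrictFDerivAt_norm_sq x).hasFDerivAt).const_add 1
    have h1 : HasDerivAt (fun t : ℝ => t ^ (-k)) (-k * (1 + ‖x‖ ^ 2) ^ (-k - 1))
        (1 + ‖x‖ ^ 2) :=
      Real.hasDerivAt_rpow_const (Or.inl (ne_of_gt (hNpos x)))
    exact h1.comp_hasFDerivAt x hNf
  have hwnorm : ∀ x, ‖(-k * (1 + ‖x‖ ^ 2) ^ (-k - 1)) • (2 • (innerSL ℝ) x)‖ ≤ k * w x := by
    intro x
    rw [norm_smul (-k * (1 + ‖x‖ ^ 2) ^ (-k - 1)) ((2 • (innerSL ℝ) x : E3 →L[ℝ] ℝ))]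
    have h2 : ‖(2 • (innerSL ℝ) x : E3 →L[ℝ] ℝ)‖ ≤ 2 * ‖x‖ := by
      rw [two_smul]
      refine le_trans (norm_add_le _ _) ?_
      rw [innerSL_apply_norm]
      ring_nf
      exact le_rfl
    have h3 : |(-k * (1 + ‖x‖ ^ 2) ^ (-k - 1))| = k * (1 + ‖x‖ ^ 2) ^ (-k - 1) := by
      rw [abs_mul, abs_neg, abs_of_pos hk0,
        abs_of_pos (Real.rpow_pos_of_pos (hNpos x) _)]
    rw [Real.norm_eq_abs, h3]
    calc k * (1 + ‖x‖ ^ 2) ^ (-k - 1) * ‖2 • (innerSL ℝ) x‖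
        ≤ k * (1 + ‖x‖ ^ 2) ^ (-k - 1) * (2 * ‖x‖) := by
          apply mul_le_mul_of_nonneg_left h2 (by positivity)
      _ ≤ k * (1 + ‖x‖ ^ 2) ^ (-k - 1) * (1 + ‖x‖ ^ 2) := by
          apply mul_le_mul_of_nonneg_left ?_ (by positivity)
          nlinarith [sq_nonneg (‖x‖ - 1)]
      _ = k * ((1 + ‖x‖ ^ 2) ^ (-k - 1) * (1 + ‖x‖ ^ 2)) := by ring
      _ = k * w x := by
          have e : (1 + ‖x‖ ^ 2) ^ (-k - 1) * (1 + ‖x‖ ^ 2) = (1 + ‖x‖ ^ 2) ^ (-k) := by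
            have h4 := Real.rpow_add (hNpos x) (-k - 1) 1
            rw [Real.rpow_one] at h4
            rw [← h4]
            norm_num
          rw [e]
  -- sqrt facts
  have hsg₂ : ∀ x, Real.sqrt (gradsq u₂ x) ^ 2 = gradsq u₂ x :=
    fun x => Real.sq_sqrt (gradsq_nonneg u₂ x)
  have hsgu : ∀ x, Real.sqrt (gradsq u x) ^ 2 = gradsq u x :=
    fun x => Real.sq_sqrt (gradsq_nonneg u x)
  have hVb : ∀ x, ‖V x‖ ≤ Real.sqrt (gradsq u₂ x) * M₁ := by
    intro x
    have h2 : ‖V x‖ ^ 2 ≤ (Real.sqrt (gradsq u₂ x) * M₁) ^ 2 := by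
      rw [mul_pow, hsg₂]
      calc ‖V x‖ ^ 2 ≤ gradsq u₂ x * ‖u₂ x‖ ^ 2 := opnorm_sq_le u₂ hu₂d x (u₂ x)
        _ ≤ gradsq u₂ x * M₁ ^ 2 := by
            apply mul_le_mul_of_nonneg_left ?_ (gradsq_nonneg u₂ x)
            exact pow_le_pow_left₀ (norm_nonneg _) (hM₁ x) 2
    have h3 := Real.sqrt_le_sqrt h2
    rwa [Real.sqrt_sq (norm_nonneg _),
      Real.sqrt_sq (mul_nonneg (Real.sqrt_nonneg _) hM₁0)] at h3
  have hDub : ∀ x, ‖fderiv ℝ u x (V x)‖ ≤ Real.sqrt (gradsq u x) * ‖V x‖ := by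
    intro x
    have h2 : ‖fderiv ℝ u x (V x)‖ ^ 2 ≤ (Real.sqrt (gradsq u x) * ‖V x‖) ^ 2 := by
      rw [mul_pow, hsgu]
      exact opnorm_sq_le u hud x (V x)
    have h3 := Real.sqrt_le_sqrt h2
    rwa [Real.sqrt_sq (norm_nonneg _),
      Real.sqrt_sq (mul_nonneg (Real.sqrt_nonneg _) (norm_nonneg _))] at h3
  -- derivative of f = w * q
  have hff : ∀ x, HasFDerivAt (fun y => w y * q y)
      (w x • (2 • (innerSL ℝ (u x)).comp (fderiv ℝ u x))
        + q x • ((-k * (1 + ‖x‖ ^ 2) ^ (-k - 1)) • (2 • (innerSL ℝ) x))) x :=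
    fun x => (hwf x).mul ((hud x).hasFDerivAt.norm_sq)
  have hfderiv : ∀ x, fderiv ℝ (fun y => w y * q y) x
      = w x • (2 • (innerSL ℝ (u x)).comp (fderiv ℝ u x))
        + q x • ((-k * (1 + ‖x‖ ^ 2) ^ (-k - 1)) • (2 • (innerSL ℝ) x)) :=
    fun x => (hff x).fderiv
  -- pointwise key bound
  have hkey : ∀ x, |fderiv ℝ (fun y => w y * q y) x (V x)| ≤
      (1/2) * (w x * q x * gradsq u₂ x)
        + (k ^ 2 + 4) * M₁ ^ 2 * (w x * (q x + gradsq u x)) := by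
    intro x
    rw [hfderiv x]
    have e1 : (w x • (2 • (innerSL ℝ (u x)).comp (fderiv ℝ u x))
        + q x • ((-k * (1 + ‖x‖ ^ 2) ^ (-k - 1)) • (2 • (innerSL ℝ) x))) (V x)
        = w x * ((2 • (innerSL ℝ (u x)).comp (fderiv ℝ u x)) (V x))
          + q x * (((-k * (1 + ‖x‖ ^ 2) ^ (-k - 1)) • (2 • (innerSL ℝ) x)) (V x)) := by
      simp
    rw [e1]
    have hA : |(2 • (innerSL ℝ (u x)).comp (fderiv ℝ u x)) (V x)|
        ≤ 2 * ‖u x‖ * (Real.sqrt (gradsq u x) * (Real.sqrt (gradsq u₂ x) * M₁)) := by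
      have e2 : (2 • (innerSL ℝ (u x)).comp (fderiv ℝ u x)) (V x)
          = 2 * ⟪u x, fderiv ℝ u x (V x)⟫ := by
        simp [two_smul, two_mul]
      rw [e2, abs_mul]
      have h4 : |⟪u x, fderiv ℝ u x (V x)⟫| ≤ ‖u x‖ * (Real.sqrt (gradsq u x)
          * (Real.sqrt (gradsq u₂ x) * M₁)) := by
        refine le_trans (abs_real_inner_le_norm _ _) ?_
        refine mul_le_mul_of_nonneg_left ?_ (norm_nonneg _)
        refine le_trans (hDub x) ?_
        exact mul_le_mul_of_nonneg_left (hVb x) (Real.sqrt_nonneg _)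
      calc |(2:ℝ)| * |⟪u x, fderiv ℝ u x (V x)⟫|
          ≤ 2 * (‖u x‖ * (Real.sqrt (gradsq u x) * (Real.sqrt (gradsq u₂ x) * M₁))) := by
            rw [abs_of_pos (by norm_num : (0:ℝ) < 2)]
            exact mul_le_mul_of_nonneg_left h4 (by norm_num)
        _ = 2 * ‖u x‖ * (Real.sqrt (gradsq u x) * (Real.sqrt (gradsq u₂ x) * M₁)) := by ring
    have hB : |(((-k * (1 + ‖x‖ ^ 2) ^ (-k - 1)) • (2 • (innerSL ℝ) x)) (V x))|
        ≤ k * w x * (Real.sqrt (gradsq u₂ x) * M₁) := by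
      rw [← Real.norm_eq_abs]
      refine le_trans (ContinuousLinearMap.le_opNorm _ _) ?_
      calc ‖(-k * (1 + ‖x‖ ^ 2) ^ (-k - 1)) • (2 • (innerSL ℝ) x)‖ * ‖V x‖
          ≤ (k * w x) * ‖V x‖ := mul_le_mul_of_nonneg_right (hwnorm x) (norm_nonneg _)
        _ ≤ (k * w x) * (Real.sqrt (gradsq u₂ x) * M₁) :=
            mul_le_mul_of_nonneg_left (hVb x) (by positivity)
    refine le_trans (abs_add_le _ _) ?_
    rw [abs_mul, abs_mul, abs_of_pos (hwpos x), abs_of_nonneg (hq0 x)]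
    have h5 : w x * |(2 • (innerSL ℝ (u x)).comp (fderiv ℝ u x)) (V x)|
        + q x * |(((-k * (1 + ‖x‖ ^ 2) ^ (-k - 1)) • (2 • (innerSL ℝ) x)) (V x))|
        ≤ w x * (2 * ‖u x‖ * (Real.sqrt (gradsq u x) * (Real.sqrt (gradsq u₂ x) * M₁)))
          + q x * (k * w x * (Real.sqrt (gradsq u₂ x) * M₁)) := by
      refine add_le_add (mul_le_mul_of_nonneg_left hA (le_of_lt (hwpos x)))
        (mul_le_mul_of_nonneg_left hB (hq0 x))
    refine le_trans h5 ?_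
    have hqx : q x = ‖u x‖ ^ 2 := rfl
    have hw0 : 0 ≤ w x := le_of_lt (hwpos x)
    obtain ⟨sg, hsgdef⟩ : ∃ t, t = Real.sqrt (gradsq u₂ x) := ⟨_, rfl⟩
    obtain ⟨su, hsudef⟩ : ∃ t, t = Real.sqrt (gradsq u x) := ⟨_, rfl⟩
    rw [← hsgdef, ← hsudef]
    have h6 : sg ^ 2 = gradsq u₂ x := by rw [hsgdef]; exact hsg₂ x
    have h7 : su ^ 2 = gradsq u x := by rw [hsudef]; exact hsgu x
    rw [hqx, ← h6, ← h7]
    nlinarith [mul_nonneg hw0 (sq_nonneg (‖u x‖ * sg / 2 - 2 * su * M₁)),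
      mul_nonneg hw0 (sq_nonneg (‖u x‖ * sg / 2 - k * ‖u x‖ * M₁)),
      mul_nonneg hw0 (mul_nonneg (mul_nonneg (sq_nonneg M₁) (sq_nonneg su)) (sq_nonneg k)),
      mul_nonneg hw0 (mul_nonneg (sq_nonneg M₁) (sq_nonneg (‖u x‖))),
      sq_nonneg k, hk0.le, hM₁0, norm_nonneg (u x), hw0]
  -- continuity facts
  have hwqcont : Continuous (fun x => w x * q x) := hfsm.continuous
  have hVcont : Continuous V := hVsm.continuous
  have hg₂cont : Continuous (gradsq u₂) := gradsq_continuous u₂ hu₂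
  have hgucont : Continuous (gradsq u) := gradsq_continuous u hu
  have hcurlcont : Continuous (fun x => ‖curl u₂ x‖ ^ 2) := curl_normsq_continuous u₂ hu₂
  have hfdVcont : Continuous (fun x => fderiv ℝ (fun y => w y * q y) x (V x)) :=
    (hfsm.continuous_fderiv one_ne_zero).clm_apply hVcont
  -- integrability
  have hIwqg : Integrable (fun x => w x * (q x + gradsq u x)) := hI1
  have hIfg₂ : Integrable (fun x => w x * q x * gradsq u₂ x) := hI2
  have hIwq : Integrable (fun x => w x * q x) := by
    refine hIwqg.mono' hwqcont.aestronglyMeasurable ?_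
    filter_upwards with x
    rw [Real.norm_eq_abs, abs_of_nonneg (mul_nonneg (hwpos x).le (hq0 x))]
    nlinarith [(hwpos x).le, hq0 x, gradsq_nonneg u x]
  have hIcurl : Integrable (fun x => w x * q x * ‖curl u₂ x‖ ^ 2) := by
    refine (hIwq.const_mul (M₂ ^ 2)).mono'
      ((hwqcont.mul hcurlcont).aestronglyMeasurable) ?_
    filter_upwards with x
    rw [Real.norm_eq_abs, abs_of_nonneg (mul_nonneg (mul_nonneg (hwpos x).le (hq0 x))
      (by positivity))]
    nlinarith [pow_le_pow_left₀ (norm_nonneg (curl u₂ x)) (hM₂ x) 2,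
      mul_nonneg (hwpos x).le (hq0 x), sq_nonneg (‖curl u₂ x‖)]
  have hmajI : Integrable (fun x => (1/2) * (w x * q x * gradsq u₂ x)
      + (k ^ 2 + 4) * M₁ ^ 2 * (w x * (q x + gradsq u x))) :=
    (hIfg₂.const_mul _).add (hIwqg.const_mul _)
  have hIfdV : Integrable (fun x => fderiv ℝ (fun y => w y * q y) x (V x)) := by
    refine hmajI.mono' hfdVcont.aestronglyMeasurable ?_
    filter_upwards with x
    rw [Real.norm_eq_abs]
    exact hkey x
  have hIG : Integrable (fun x => (w x * q x) • V x) := by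
    refine ((hIwq.add hIfg₂).const_mul (M₁ / 2)).mono'
      hGsm.continuous.aestronglyMeasurable ?_
    filter_upwards with x
    rw [norm_smul, Real.norm_eq_abs, abs_of_nonneg (mul_nonneg (hwpos x).le (hq0 x))]
    have h1 : Real.sqrt (gradsq u₂ x) ≤ (1 + gradsq u₂ x) / 2 := by
      nlinarith [hsg₂ x, Real.sqrt_nonneg (gradsq u₂ x),
        sq_nonneg (Real.sqrt (gradsq u₂ x) - 1)]
    have h2 : ‖V x‖ ≤ (1 + gradsq u₂ x) / 2 * M₁ :=
      le_trans (hVb x) (mul_le_mul_of_nonneg_right h1 hM₁0)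
    calc w x * q x * ‖V x‖ ≤ w x * q x * ((1 + gradsq u₂ x) / 2 * M₁) :=
          mul_le_mul_of_nonneg_left h2 (mul_nonneg (hwpos x).le (hq0 x))
      _ = M₁ / 2 * (w x * q x + w x * q x * gradsq u₂ x) := by ring
  -- divergence identity
  have hdivG : ∀ x, ∑ i, pd (fun y => ((w y * q y) • V y) i) i x
      = fderiv ℝ (fun y => w y * q y) x (V x)
        + (w x * q x * gradsq u₂ x - w x * q x * ‖curl u₂ x‖ ^ 2) := by
    intro x
    have hVi : ∀ i : Fin 3, DifferentiableAt ℝ (fun y => V y i) x := fun i =>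
      ((EuclideanSpace.proj (𝕜 := ℝ) i).differentiable.comp (hVsm.differentiable one_ne_zero)) x
    have hstep : ∀ i : Fin 3, pd (fun y => ((w y * q y) • V y) i) i x
        = w x * q x * pd (fun y => V y i) i x
          + V x i * (fderiv ℝ (fun y => w y * q y) x (EuclideanSpace.single i 1)) := by
      intro i
      have h1 : HasFDerivAt (fun y => (w y * q y) * V y i)
          ((w x * q x) • (fderiv ℝ (fun y => V y i) x)
            + (V x i) • (fderiv ℝ (fun y => w y * q y) x)) x :=
        HasFDerivAt.mul ((hfsm.differentiable one_ne_zero x).hasFDerivAt) (hVi i).hasFDerivAt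
      have h2 : pd (fun y => ((w y * q y) • V y) i) i x
          = pd (fun y => (w y * q y) * V y i) i x := rfl
      rw [h2]
      show fderiv ℝ _ x _ = _
      rw [h1.fderiv]
      simp [pd]
  -- putting the divergence pieces together at each point
    have hsumV : (∑ i, pd (fun y => V y i) i x) = gradsq u₂ x - ‖curl u₂ x‖ ^ 2 :=
      divV_eq u₂ hu₂ hdiv₂ x
    calc ∑ i, pd (fun y => ((w y * q y) • V y) i) i x
        = ∑ i, (w x * q x * pd (fun y => V y i) i x
            + V x i * (fderiv ℝ (fun y => w y * q y) x (EuclideanSpace.single i 1))) :=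
          Finset.sum_congr rfl fun i _ => hstep i
      _ = w x * q x * (∑ i, pd (fun y => V y i) i x)
            + ∑ i, V x i * (fderiv ℝ (fun y => w y * q y) x (EuclideanSpace.single i 1)) := by
          rw [Finset.sum_add_distrib, Finset.mul_sum]
      _ = w x * q x * (gradsq u₂ x - ‖curl u₂ x‖ ^ 2)
            + fderiv ℝ (fun y => w y * q y) x (V x) := by
          rw [hsumV, clm_apply_decomp (fderiv ℝ (fun y => w y * q y) x) (V x)]
      _ = _ := by ring
  -- divergence theorem
  have hIdivG : Integrable (fun x => ∑ i, pd (fun y => ((w y * q y) • V y) i) i x) := by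
    have e : (fun x => ∑ i, pd (fun y => ((w y * q y) • V y) i) i x)
        = fun x => fderiv ℝ (fun y => w y * q y) x (V x)
            + (w x * q x * gradsq u₂ x - w x * q x * ‖curl u₂ x‖ ^ 2) := funext hdivG
    rw [e]
    exact hIfdV.add (hIfg₂.sub hIcurl)
  have hzero : (∫ x, ∑ i, pd (fun y => ((w y * q y) • V y) i) i x) = 0 :=
    div_thm _ hGsm hIG hIdivG
  have hsplit : (∫ x, w x * q x * gradsq u₂ x)
      = (∫ x, w x * q x * ‖curl u₂ x‖ ^ 2)
        - ∫ x, fderiv ℝ (fun y => w y * q y) x (V x) := by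
    have e : (fun x => ∑ i, pd (fun y => ((w y * q y) • V y) i) i x)
        = fun x => fderiv ℝ (fun y => w y * q y) x (V x)
            + (w x * q x * gradsq u₂ x - w x * q x * ‖curl u₂ x‖ ^ 2) := funext hdivG
    rw [e] at hzero
    have hsub : Integrable (fun x => w x * q x * gradsq u₂ x
        - w x * q x * ‖curl u₂ x‖ ^ 2) := hIfg₂.sub hIcurl
    have h5 : (∫ x, (fderiv ℝ (fun y => w y * q y) x (V x)
          + (w x * q x * gradsq u₂ x - w x * q x * ‖curl u₂ x‖ ^ 2)))
        = (∫ x, fderiv ℝ (fun y => w y * q y) x (V x))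
          + ∫ x, (w x * q x * gradsq u₂ x - w x * q x * ‖curl u₂ x‖ ^ 2) :=
      integral_add hIfdV hsub
    have h6 : (∫ x, (w x * q x * gradsq u₂ x - w x * q x * ‖curl u₂ x‖ ^ 2))
        = (∫ x, w x * q x * gradsq u₂ x) - ∫ x, w x * q x * ‖curl u₂ x‖ ^ 2 :=
      integral_sub hIfg₂ hIcurl
    rw [h5, h6] at hzero
    linarith
  -- final estimates
  have hIpos : 0 ≤ ∫ x, w x * (q x + gradsq u x) :=
    integral_nonneg fun x => mul_nonneg (hwpos x).le (add_nonneg (hq0 x) (gradsq_nonneg u x))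
  have hb1 : (∫ x, w x * q x * ‖curl u₂ x‖ ^ 2)
      ≤ M₂ ^ 2 * ∫ x, w x * (q x + gradsq u x) := by
    calc (∫ x, w x * q x * ‖curl u₂ x‖ ^ 2)
        ≤ ∫ x, M₂ ^ 2 * (w x * (q x + gradsq u x)) := by
          refine integral_mono hIcurl (hIwqg.const_mul _) fun x => ?_
          nlinarith [pow_le_pow_left₀ (norm_nonneg (curl u₂ x)) (hM₂ x) 2,
            mul_nonneg (hwpos x).le (hq0 x), (hwpos x).le, gradsq_nonneg u x,
            sq_nonneg M₂, sq_nonneg (‖curl u₂ x‖),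
            mul_nonneg (sq_nonneg M₂) (mul_nonneg (hwpos x).le (gradsq_nonneg u x))]
      _ = M₂ ^ 2 * ∫ x, w x * (q x + gradsq u x) := integral_const_mul _ _
  have hb2 : -(∫ x, fderiv ℝ (fun y => w y * q y) x (V x))
      ≤ (1/2) * (∫ x, w x * q x * gradsq u₂ x)
        + (k ^ 2 + 4) * M₁ ^ 2 * ∫ x, w x * (q x + gradsq u x) := by
    have h1 : -(∫ x, fderiv ℝ (fun y => w y * q y) x (V x))
        ≤ ∫ x, |fderiv ℝ (fun y => w y * q y) x (V x)| := by
      refine le_trans (neg_le_abs _) ?_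
      rw [← Real.norm_eq_abs]
      refine le_trans (norm_integral_le_integral_norm _) ?_
      refine le_of_eq (integral_congr_ae ?_)
      filter_upwards with x
      rw [Real.norm_eq_abs]
    refine le_trans h1 ?_
    calc (∫ x, |fderiv ℝ (fun y => w y * q y) x (V x)|)
        ≤ ∫ x, ((1/2) * (w x * q x * gradsq u₂ x)
            + (k ^ 2 + 4) * M₁ ^ 2 * (w x * (q x + gradsq u x))) :=
          integral_mono hIfdV.abs hmajI fun x => hkey x
      _ = (1/2) * (∫ x, w x * q x * gradsq u₂ x)
            + (k ^ 2 + 4) * M₁ ^ 2 * ∫ x, w x * (q x + gradsq u x) := by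
          rw [integral_add (hIfg₂.const_mul _) (hIwqg.const_mul _),
            integral_const_mul, integral_const_mul]
  show (∫ x, w x * q x * gradsq u₂ x)
      ≤ (2 * k ^ 2 + 8) * (M₁ ^ 2 + M₂ ^ 2) * ∫ x, w x * (q x + gradsq u x)
  nlinarith [hsplit, hb1, hb2, hIpos, sq_nonneg k, sq_nonneg M₁, sq_nonneg M₂,
    mul_nonneg (mul_nonneg (sq_nonneg k) (sq_nonneg M₂)) hIpos,
    mul_nonneg (sq_nonneg M₂) hIpos, mul_nonneg (sq_nonneg M₁) hIpos,
    mul_nonneg (mul_nonneg (sq_nonneg k) (sq_nonneg M₁)) hIpos]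
end
end
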